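/- Area Theorem (partial area): for every binary linear code C of length N and every ε ∈ [0, 1], ∫₀^ε (1/N) Σ_{i=1}^{N} μ_x(Ω_i(C)) dx = (1/N) Σ_{E ⊆ [N]} ε^{|E|} (1−ε)^{N−|E|} · dim_{F₂}{c ∈ C : {j : c_j = 1} ⊆ E}; the right-hand side equals (1/N)·H(X|Y), the normalized conditional entropy (in bits) of a uniformly random codeword X given its observation Y through BEC(ε). -/

import Mathlib

open Classical in
noncomputable def mu {α : Type*} [Fintype α] (ε : ℝ) (Ω : Set (Finset α)) : ℝ :=
  ∑ ω ∈ Finset.univ.filter (fun w => w ∈ Ω),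
    ε ^ ω.card * (1 - ε) ^ (Fintype.card α - ω.card)

def Omega {ι : Type*} (C : Submodule (ZMod 2) (ι → ZMod 2)) (i : ι) :
    Set (Finset {j : ι // j ≠ i}) :=
  {ω | ∃ c ∈ C, c i = 1 ∧ ∀ (j : ι) (h : j ≠ i), c j = 1 → (⟨j, h⟩ : {j : ι // j ≠ i}) ∈ ω}

def TwoTransitive {ι : Type*} (C : Submodule (ZMod 2) (ι → ZMod 2)) : Prop :=
  ∀ a b c d : ι, a ≠ b → c ≠ d →
    ∃ π : Equiv.Perm ι, π a = c ∧ π b = d ∧ ∀ x, x ∈ C ↔ (x ∘ π) ∈ C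

def RM (n r : ℕ) : Submodule (ZMod 2) ((Fin n → ZMod 2) → ZMod 2) where
  carrier := {f | ∃ p : MvPolynomial (Fin n) (ZMod 2),
    p.totalDegree ≤ r ∧ ∀ v, f v = MvPolynomial.eval v p}
  zero_mem' := ⟨0, by simp, fun v => by simp⟩
  add_mem' := by
    rintro f g ⟨p, hp, hf⟩ ⟨q, hq, hg⟩
    exact ⟨p + q, le_trans (MvPolynomial.totalDegree_add p q) (max_le hp hq),
      fun v => by simp [hf v, hg v]⟩
  smul_mem' := by
    rintro c f ⟨p, hp, hf⟩
    exact ⟨c • p, le_trans (MvPolynomial.totalDegree_smul_le c p) hp,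
      fun v => by simp [hf v]⟩

/-- The submodule of words of $(\mathbb{F}_2)^N$ supported inside the set $E$. -/
def suppCode (N : ℕ) (E : Finset (Fin N)) : Submodule (ZMod 2) (Fin N → ZMod 2) where
  carrier := {c | ∀ j ∉ E, c j = 0}
  zero_mem' := fun j _ => rfl
  add_mem' := by
    intro a b ha hb j hj
    simp [ha j hj, hb j hj]
  smul_mem' := by
    intro c a ha j hj
    simp [ha j hj]

open Classical

namespace Area

noncomputable def fr (N : ℕ) (C : Submodule (ZMod 2) (Fin N → ZMod 2))
    (E : Finset (Fin N)) : ℝ :=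
  (Module.finrank (ZMod 2) ↥(C ⊓ suppCode N E) : ℝ)

lemma zmod_two_cases (a : ZMod 2) : a = 0 ∨ a = 1 := by fin_cases a <;> [exact Or.inl rfl; exact Or.inr rfl]

lemma fr_empty (N : ℕ) (C : Submodule (ZMod 2) (Fin N → ZMod 2)) : fr N C ∅ = 0 := by
  have : C ⊓ suppCode N ∅ = ⊥ := by
    rw [eq_bot_iff]
    intro x hx
    have hz : x = 0 := funext fun j => hx.2 j (Finset.notMem_empty j)
    simp [hz]
  rw [fr, this, finrank_bot]
  simp

lemma dim_jump (N : ℕ) (C : Submodule (ZMod 2) (Fin N → ZMod 2)) (i : Fin N)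
    (E : Finset (Fin N)) (hi : i ∉ E) :
    fr N C (insert i E)
      = fr N C E + (if E.subtype (· ≠ i) ∈ Omega C i then (1 : ℝ) else 0) := by
  haveI : Fact (Nat.Prime 2) := ⟨Nat.prime_two⟩
  set W := C ⊓ suppCode N (insert i E) with hW
  let φ : W →ₗ[ZMod 2] ZMod 2 := (LinearMap.proj i).comp W.subtype
  have hker : (LinearMap.ker φ).map W.subtype = C ⊓ suppCode N E := by
    ext x
    simp only [Submodule.mem_map, LinearMap.mem_ker]
    constructor
    · rintro ⟨⟨c, hc⟩, hk, rfl⟩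
      refine ⟨hc.1, fun j hj => ?_⟩
      by_cases hji : j = i
      · subst hji; exact hk
      · exact hc.2 j (by simp [hji, hj])
    · rintro ⟨hxC, hxE⟩
      refine ⟨⟨x, hxC, fun j hj => hxE j (fun h => hj (Finset.mem_insert_of_mem h))⟩, ?_, rfl⟩
      exact hxE i hi
  have hrn : Module.finrank (ZMod 2) ↥(LinearMap.range φ)
      + Module.finrank (ZMod 2) ↥(LinearMap.ker φ) = Module.finrank (ZMod 2) W :=
    LinearMap.finrank_range_add_finrank_ker φ
  have hker' : Module.finrank (ZMod 2) ↥(LinearMap.ker φ)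
      = Module.finrank (ZMod 2) ↥(C ⊓ suppCode N E) := by
    rw [← hker]
    exact (Submodule.finrank_map_subtype_eq W _).symm
  have homega : E.subtype (· ≠ i) ∈ Omega C i ↔ ∃ c ∈ W, c i = 1 := by
    constructor
    · rintro ⟨c, hc, hci, hsupp⟩
      refine ⟨c, ⟨hc, fun j hj => ?_⟩, hci⟩
      rcases zmod_two_cases (c j) with h | h
      · exact h
      · exfalso
        have hji : j ≠ i := fun h' => hj (h' ▸ Finset.mem_insert_self i E)
        have := hsupp j hji h
        rw [Finset.mem_subtype] at this
        exact hj (Finset.mem_insert_of_mem this)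
    · rintro ⟨c, hc, hci⟩
      exact ⟨c, hc.1, hci, fun j hj hcj => by
        rw [Finset.mem_subtype]
        rcases Finset.mem_insert.1 (by
          by_contra h
          exact one_ne_zero (hcj ▸ hc.2 j h)) with h | h
        · exact absurd h hj
        · exact h⟩
  have hrange : Module.finrank (ZMod 2) ↥(LinearMap.range φ)
      = if E.subtype (· ≠ i) ∈ Omega C i then 1 else 0 := by
    rw [homega]
    by_cases h : ∃ c ∈ W, c i = 1
    · rw [if_pos h]
      obtain ⟨c, hc, hci⟩ := h
      have : LinearMap.range φ = ⊤ := by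
        rw [eq_top_iff]
        intro x _
        refine ⟨x • ⟨c, hc⟩, ?_⟩
        simp [φ, hci]
      rw [this, finrank_top, Module.finrank_self]
    · rw [if_neg h]
      have : LinearMap.range φ = ⊥ := by
        rw [eq_bot_iff]
        rintro x ⟨⟨c, hc⟩, rfl⟩
        simp only [Submodule.mem_bot]
        rcases zmod_two_cases (c i) with h' | h'
        · exact h'
        · exact absurd ⟨c, hc, h'⟩ h
      rw [this, finrank_bot]
  rw [fr, fr, ← hker', ← hW]
  rw [← hrn, hrange]
  by_cases h : E.subtype (· ≠ i) ∈ Omega C i <;> simp [h] <;> push_cast <;> ring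

lemma deriv_term (w m : ℕ) (x : ℝ) :
    HasDerivAt (fun x : ℝ => x ^ w * (1 - x) ^ m)
      ((w : ℝ) * x ^ (w - 1) * (1 - x) ^ m - (m : ℝ) * (x ^ w * (1 - x) ^ (m - 1))) x := by
  have h1 : HasDerivAt (fun x : ℝ => (1 - x) ^ m) ((m : ℝ) * (1 - x) ^ (m - 1) * (-1)) x :=
    (hasDerivAt_pow m (1 - x)).comp x (((hasDerivAt_id x).const_sub 1))
  have := (hasDerivAt_pow w x).fun_mul h1
  exact this.congr_deriv (by ring)

lemma subtype_map_eq {α : Type*} {p : α → Prop} [DecidablePred p] (ω : Finset {x // p x}) :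
    (ω.map (Function.Embedding.subtype p)).subtype p = ω := by
  ext ⟨j, hj⟩
  simp only [Finset.mem_subtype, Finset.mem_map, Function.Embedding.coe_subtype]
  constructor
  · rintro ⟨⟨a, ha⟩, hm, rfl⟩
    exact hm
  · intro hm
    exact ⟨⟨j, hj⟩, hm, rfl⟩

lemma card_subtype_ne {N : ℕ} (i : Fin N) (E : Finset (Fin N)) (hi : i ∉ E) :
    (E.subtype (· ≠ i)).card = E.card := by
  rw [Finset.card_subtype, Finset.filter_ne', Finset.erase_eq_of_notMem hi]

lemma mu_eq {N : ℕ} (C : Submodule (ZMod 2) (Fin N → ZMod 2)) (i : Fin N) (x : ℝ) :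
    mu x (Omega C i)
      = ∑ E ∈ Finset.univ.filter
          (fun E : Finset (Fin N) => i ∉ E ∧ E.subtype (· ≠ i) ∈ Omega C i),
          x ^ E.card * (1 - x) ^ (N - E.card - 1) := by
  have hcard : Fintype.card {j : Fin N // j ≠ i} = N - 1 := by
    simp [Fintype.card_subtype_compl, Fintype.card_subtype_eq]
  rw [mu]
  refine (Finset.sum_bij' (fun E _ => E.subtype (· ≠ i))
    (fun ω _ => ω.map (Function.Embedding.subtype _)) ?_ ?_ ?_ ?_ ?_).symm
  · intro E hE
    simp only [Finset.mem_filter, Finset.mem_univ, true_and] at hE ⊢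
    exact hE.2
  · intro ω hω
    simp only [Finset.mem_filter, Finset.mem_univ, true_and] at hω ⊢
    constructor
    · intro hmem
      exact (Finset.property_of_mem_map_subtype ω hmem) rfl
    · rwa [subtype_map_eq]
  · intro E hE
    simp only [Finset.mem_filter, Finset.mem_univ, true_and] at hE
    show (E.subtype (· ≠ i)).map _ = E
    rw [Finset.subtype_map, Finset.filter_ne', Finset.erase_eq_of_notMem hE.1]
  · intro ω _
    show (ω.map _).subtype _ = ω
    exact subtype_map_eq ω
  · intro E hE
    simp only [Finset.mem_filter, Finset.mem_univ, true_and] at hE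
    rw [card_subtype_ne i E hE.1, hcard]
    congr 2
    have h1 : E.card < N := by
      have hne : E ≠ Finset.univ := fun h => hE.1 (by rw [h]; exact Finset.mem_univ i)
      have h2 := Finset.card_lt_card (Finset.ssubset_univ_iff.2 hne)
      simpa using h2
    omega

lemma sum_ite_card {N : ℕ} (E : Finset (Fin N)) (a b : ℝ) :
    ∑ i : Fin N, (if i ∈ E then a else b)
      = (E.card : ℝ) * a + ((N - E.card : ℕ) : ℝ) * b := by
  rw [Finset.sum_ite, Finset.sum_const, Finset.sum_const]
  have h1 : Finset.univ.filter (· ∈ E) = E := by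
    ext j; simp
  have h2 : (Finset.univ.filter (fun j => ¬ j ∈ E)).card = N - E.card := by
    have : Finset.univ.filter (fun j => ¬ j ∈ E) = Eᶜ := by
      ext j; simp [Finset.mem_compl]
    rw [this, Finset.card_compl]
    simp
  rw [h1, h2]
  simp [nsmul_eq_mul]

lemma per_i {N : ℕ} (C : Submodule (ZMod 2) (Fin N → ZMod 2)) (i : Fin N) (x : ℝ) :
    ∑ E : Finset (Fin N),
      (if i ∈ E then x ^ (E.card - 1) * (1 - x) ^ (N - E.card) * fr N C E
        else -(x ^ E.card * (1 - x) ^ (N - E.card - 1) * fr N C E))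
      = mu x (Omega C i) := by
  rw [Finset.sum_ite]
  have h1 : ∑ E ∈ Finset.univ.filter (fun E : Finset (Fin N) => i ∈ E),
        x ^ (E.card - 1) * (1 - x) ^ (N - E.card) * fr N C E
      = ∑ E ∈ Finset.univ.filter (fun E : Finset (Fin N) => ¬ i ∈ E),
        x ^ E.card * (1 - x) ^ (N - E.card - 1) * fr N C (insert i E) := by
    refine Finset.sum_bij' (fun E _ => E.erase i) (fun E _ => insert i E) ?_ ?_ ?_ ?_ ?_
    · intro E hE
      simp
    · intro E hE
      simp only [Finset.mem_filter, Finset.mem_univ, true_and] at hE ⊢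
      simp [hE]
    · intro E hE
      simp only [Finset.mem_filter, Finset.mem_univ, true_and] at hE
      exact Finset.insert_erase hE
    · intro E hE
      simp only [Finset.mem_filter, Finset.mem_univ, true_and] at hE
      exact Finset.erase_insert hE
    · intro E hE
      simp only [Finset.mem_filter, Finset.mem_univ, true_and] at hE
      have hc : 1 ≤ E.card := Finset.card_pos.2 ⟨i, hE⟩
      rw [Finset.card_erase_of_mem hE, Finset.insert_erase hE,
        show N - (E.card - 1) - 1 = N - E.card by omega]
  rw [h1, ← Finset.sum_add_distrib]
  have h2 : ∀ E ∈ Finset.univ.filter (fun E : Finset (Fin N) => ¬ i ∈ E),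
      x ^ E.card * (1 - x) ^ (N - E.card - 1) * fr N C (insert i E)
        + -(x ^ E.card * (1 - x) ^ (N - E.card - 1) * fr N C E)
      = if E.subtype (· ≠ i) ∈ Omega C i then x ^ E.card * (1 - x) ^ (N - E.card - 1) else 0 := by
    intro E hE
    simp only [Finset.mem_filter, Finset.mem_univ, true_and] at hE
    rw [dim_jump N C i E hE]
    by_cases h : E.subtype (· ≠ i) ∈ Omega C i <;> simp [h] <;> ring
  rw [Finset.sum_congr rfl h2, ← Finset.sum_filter, Finset.filter_filter, mu_eq]

lemma key_identity {N : ℕ} (C : Submodule (ZMod 2) (Fin N → ZMod 2)) (x : ℝ) :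
    ∑ E : Finset (Fin N),
      ((E.card : ℝ) * x ^ (E.card - 1) * (1 - x) ^ (N - E.card)
        - ((N - E.card : ℕ) : ℝ) * (x ^ E.card * (1 - x) ^ (N - E.card - 1))) * fr N C E
      = ∑ i : Fin N, mu x (Omega C i) := by
  have step1 : ∀ E : Finset (Fin N),
      ((E.card : ℝ) * x ^ (E.card - 1) * (1 - x) ^ (N - E.card)
        - ((N - E.card : ℕ) : ℝ) * (x ^ E.card * (1 - x) ^ (N - E.card - 1))) * fr N C E
      = ∑ i : Fin N,
        (if i ∈ E then x ^ (E.card - 1) * (1 - x) ^ (N - E.card) * fr N C E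
          else -(x ^ E.card * (1 - x) ^ (N - E.card - 1) * fr N C E)) := by
    intro E
    rw [sum_ite_card]
    ring
  calc ∑ E : Finset (Fin N), _ = ∑ E : Finset (Fin N), ∑ i : Fin N,
        (if i ∈ E then x ^ (E.card - 1) * (1 - x) ^ (N - E.card) * fr N C E
          else -(x ^ E.card * (1 - x) ^ (N - E.card - 1) * fr N C E)) :=
        Finset.sum_congr rfl (fun E _ => step1 E)
    _ = ∑ i : Fin N, ∑ E : Finset (Fin N), _ := Finset.sum_comm
    _ = ∑ i : Fin N, mu x (Omega C i) := Finset.sum_congr rfl (fun i _ => per_i C i x)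

lemma hasDerivF {N : ℕ} (C : Submodule (ZMod 2) (Fin N → ZMod 2)) (x : ℝ) :
    HasDerivAt (fun y : ℝ => ∑ E : Finset (Fin N),
        y ^ E.card * (1 - y) ^ (N - E.card) * fr N C E)
      (∑ i : Fin N, mu x (Omega C i)) x := by
  have h := HasDerivAt.fun_sum (fun (E : Finset (Fin N)) (_ : E ∈ Finset.univ) =>
    (deriv_term E.card (N - E.card) x).mul_const (fr N C E))
  rw [← key_identity C x]
  exact h

end Area

/-- Area Theorem (partial area): for a binary linear code $C[N,K]$ and
$\varepsilon \in [0,1]$, the integral of the average EXIT function up to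
$\varepsilon$ equals $\frac1N H(X\mid Y)$, the normalized conditional entropy of a
uniform codeword $X$ given its $BEC(\varepsilon)$-observation $Y$, which is the
expected $\mathbb{F}_2$-dimension of the subspace of codewords supported within the
random erased set. -/
theorem area_theorem_partial (N : ℕ) (hN : 0 < N)
    (C : Submodule (ZMod 2) (Fin N → ZMod 2)) (ε : ℝ) (hε : ε ∈ Set.Icc (0:ℝ) 1) :
    ∫ x in (0:ℝ)..ε, (1 / (N : ℝ)) * ∑ i : Fin N, mu x (Omega C i)
      = (1 / (N : ℝ)) * ∑ E : Finset (Fin N),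
          ε ^ E.card * (1 - ε) ^ (N - E.card) *
            (Module.finrank (ZMod 2) ↥(C ⊓ suppCode N E) : ℝ) := by
  have hcont : Continuous (fun x : ℝ => ∑ i : Fin N, mu x (Omega C i)) := by
    apply continuous_finset_sum
    intro i _
    unfold mu
    apply continuous_finset_sum
    intro ω _
    fun_prop
  rw [intervalIntegral.integral_const_mul]
  rw [intervalIntegral.integral_eq_sub_of_hasDerivAt
    (fun x _ => Area.hasDerivF C x) (hcont.intervalIntegrable 0 ε)]
  have hF0 : ∑ E : Finset (Fin N), (0:ℝ) ^ E.card * (1 - 0) ^ (N - E.card) * Area.fr N C E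
      = 0 := by
    rw [Finset.sum_eq_single ∅]
    · simp [Area.fr_empty]
    · intro E _ hE
      have : E.card ≠ 0 := fun h => hE (Finset.card_eq_zero.1 h)
      simp [zero_pow this]
    · intro h
      exact absurd (Finset.mem_univ ∅) h
  rw [hF0, sub_zero]
  rfl
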